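/- Let $0 < \gamma < 1 < c$, let $I \subseteq \mathbb{R}$ be an interval, and let $X \geq 3$, $L = \log X$. Define $S_0(\theta; X) = \sum_{X/2 < p \leq X} \gamma p^{\gamma-1} (\log p) e(\theta p^c)$, summed over primes $p$. Then $\int_I |S_0(\theta; X)|^2 \, d\theta \ll |I| X^{2\gamma-1} L + X^{2\gamma-c} L^2$, with implied constant depending only on $\gamma$ and $c$. -/

import Mathlib

/-!
Expanding the square, `∫_I |S₀|² = ∑_{p,q} w_p w_q ∫_I e(θ(p^c - q^c))` with
`w_p = γ p^(γ-1) log p ≤ γ (X/2)^(γ-1) log p`. The diagonal contributes `|I| ∑ w_p²`. Off the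
diagonal, the mean value theorem gives `|p^c - q^c| ≥ c (X/2)^(c-1) |p - q|`, so each integral is
`≪ X^(1-c) / |p - q|`, and the sum of `1 / |p - q|` over `q ≤ X` is `≪ log X`. Chebyshev's bound
`∑_{p ≤ X} log p ≤ X log 4` then gives both terms.
-/

open MeasureTheory

/-- `e(x) = e^{2πix}`. -/
noncomputable def e (x : ℝ) : ℂ := Complex.exp (2 * Real.pi * Complex.I * x)

open Finset Real ComplexConjugate

lemma norm_e (x : ℝ) : ‖e x‖ = 1 := by
  rw [e, Complex.norm_exp]; simp

lemma e_mul_conj_e (x y : ℝ) : e x * conj (e y) = e (x - y) := by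
  rw [e, e, ← Complex.exp_conj, ← Complex.exp_add]
  congr 1
  simp only [map_mul, Complex.conj_I, Complex.conj_ofReal, map_ofNat]
  push_cast
  ring

@[fun_prop]
lemma continuous_e : Continuous e := by
  unfold e; fun_prop

lemma norm_integral_e_mul_le_abs_sub (a b Δ : ℝ) : ‖∫ θ in a..b, e (θ * Δ)‖ ≤ |b - a| := by
  simpa using intervalIntegral.norm_integral_le_of_norm_le_const fun θ _ => (norm_e (θ * Δ)).le

lemma norm_integral_e_mul_le_inv (a b : ℝ) {Δ : ℝ} (hΔ : Δ ≠ 0) :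
    ‖∫ θ in a..b, e (θ * Δ)‖ ≤ (π * |Δ|)⁻¹ := by
  set z : ℂ := 2 * π * Complex.I * Δ
  have hz : z ≠ 0 := by simp [z, pi_ne_zero, hΔ]
  have hnorm_z : ‖z‖ = 2 * (π * |Δ|) := by simp [z, abs_of_pos pi_pos]; ring
  have he : ∀ θ : ℝ, e (θ * Δ) = Complex.exp (z * θ) := fun θ => by
    simp only [e, z]; push_cast; ring_nf
  simp_rw [he, integral_exp_mul_complex hz, norm_div, hnorm_z]
  have hnum : ‖Complex.exp (z * b) - Complex.exp (z * a)‖ ≤ 2 := by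
    simpa only [← he, norm_e, one_add_one_eq_two] using norm_sub_le (e (b * Δ)) (e (a * Δ))
  calc ‖Complex.exp (z * b) - Complex.exp (z * a)‖ / (2 * (π * |Δ|))
      ≤ 2 / (2 * (π * |Δ|)) := by gcongr
    _ = (π * |Δ|)⁻¹ := by field_simp

lemma integral_norm_sum_sq_le {ι : Type*} (s : Finset ι) (u : ι → ℂ) (r : ι → ℝ) (a b : ℝ) :
    ∫ θ in a..b, ‖∑ p ∈ s, u p * e (θ * r p)‖ ^ 2
      ≤ ∑ p ∈ s, ∑ q ∈ s, ‖u p‖ * ‖u q‖ * ‖∫ θ in a..b, e (θ * (r p - r q))‖ := by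
  set F : ℝ → ℂ := fun θ => ∑ p ∈ s, ∑ q ∈ s, u p * conj (u q) * e (θ * (r p - r q))
  have hF : ∀ θ : ℝ, ‖∑ p ∈ s, u p * e (θ * r p)‖ ^ 2 = (F θ).re := fun θ => by
    rw [← Complex.ofReal_re (_ ^ 2), Complex.ofReal_pow, ← Complex.mul_conj', map_sum, sum_mul_sum]
    congr 1
    refine sum_congr rfl fun p _ => sum_congr rfl fun q _ => ?_
    rw [map_mul, mul_mul_mul_comm, e_mul_conj_e, ← mul_sub]
  have hFint : IntervalIntegrable F volume a b :=
    (by fun_prop : Continuous F).intervalIntegrable a b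
  calc ∫ θ in a..b, ‖∑ p ∈ s, u p * e (θ * r p)‖ ^ 2
      = (∑ p ∈ s, ∑ q ∈ s, u p * conj (u q) * ∫ θ in a..b, e (θ * (r p - r q))).re := by
        simp_rw [hF, ← RCLike.re_to_complex, intervalIntegral.intervalIntegral_re hFint, F]
        congr 1
        rw [intervalIntegral.integral_finsetSum fun p _ => by
          exact (by fun_prop : Continuous _).intervalIntegrable a b]
        refine sum_congr rfl fun p _ => ?_
        rw [intervalIntegral.integral_finsetSum fun q _ => by
          exact (by fun_prop : Continuous _).intervalIntegrable a b]
        exact sum_congr rfl fun q _ => intervalIntegral.integral_const_mul _ _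
    _ ≤ ‖∑ p ∈ s, ∑ q ∈ s, u p * conj (u q) * ∫ θ in a..b, e (θ * (r p - r q))‖ :=
        Complex.re_le_norm _
    _ ≤ ∑ p ∈ s, ∑ q ∈ s, ‖u p‖ * ‖u q‖ * ‖∫ θ in a..b, e (θ * (r p - r q))‖ := by
        refine (norm_sum_le _ _).trans (sum_le_sum fun p _ => (norm_sum_le _ _).trans ?_)
        simp only [norm_mul, Complex.norm_conj, le_refl]

lemma mul_rpow_sub_one_mul_sub_le_rpow_sub_rpow {c M x y : ℝ} (hc : 1 ≤ c) (hM : 0 < M)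
    (hx : M ≤ x) (hxy : x ≤ y) : c * M ^ (c - 1) * (y - x) ≤ y ^ c - x ^ c := by
  have hderiv : ∀ t ∈ interior (Set.Ici M), c * M ^ (c - 1) ≤ deriv (· ^ c) t := by
    intro t ht
    rw [interior_Ici, Set.mem_Ioi] at ht
    rw [Real.deriv_rpow_const]
    gcongr
  exact (convex_Ici M).mul_sub_le_image_sub_of_le_deriv
    (continuousOn_id.rpow_const fun _ _ => Or.inr (by linarith))
    (fun t ht => (Real.differentiableAt_rpow_const_of_ne c (by
      rw [interior_Ici] at ht; exact (hM.trans ht).ne')).differentiableWithinAt)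
    hderiv x hx y (hx.trans hxy) hxy

lemma mul_rpow_sub_one_mul_abs_sub_le {c M x y : ℝ} (hc : 1 ≤ c) (hM : 0 < M)
    (hx : M ≤ x) (hy : M ≤ y) : c * M ^ (c - 1) * |x - y| ≤ |x ^ c - y ^ c| := by
  rcases le_total x y with hxy | hxy
  · rw [abs_sub_comm, abs_of_nonneg (sub_nonneg.2 hxy), abs_sub_comm]
    exact (mul_rpow_sub_one_mul_sub_le_rpow_sub_rpow hc hM hx hxy).trans (le_abs_self _)
  · rw [abs_of_nonneg (sub_nonneg.2 hxy)]
    exact (mul_rpow_sub_one_mul_sub_le_rpow_sub_rpow hc hM hy hxy).trans (le_abs_self _)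

lemma sum_Icc_inv_le_one_add_log (n : ℕ) : ∑ d ∈ Icc 1 n, (d : ℝ)⁻¹ ≤ 1 + log n := by
  have h := harmonic_le_one_add_log n
  rw [harmonic_eq_sum_Icc] at h
  push_cast at h
  exact h

lemma sum_inv_comp_le_one_add_log {ι : Type*} {t : Finset ι} {σ : ι → ℕ} {n : ℕ}
    (hσ : Set.InjOn σ t) (hmaps : ∀ q ∈ t, σ q ∈ Icc 1 n) :
    ∑ q ∈ t, (σ q : ℝ)⁻¹ ≤ 1 + log n := by
  rw [← sum_image (f := fun d : ℕ => (d : ℝ)⁻¹) hσ]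
  exact (sum_le_sum_of_subset_of_nonneg (image_subset_iff.2 hmaps) fun _ _ _ => by positivity).trans
    (sum_Icc_inv_le_one_add_log n)

lemma sum_inv_abs_sub_le {n p : ℕ} {t : Finset ℕ} (hp : p ≤ n) (ht : ∀ q ∈ t, q ≤ n)
    (hpt : p ∉ t) : ∑ q ∈ t, |(p : ℝ) - q|⁻¹ ≤ 2 * (1 + log n) := by
  have hcast : ∀ q : ℕ, |(p : ℝ) - q| = (((p : ℤ) - q).natAbs : ℝ) := fun q => by
    rw [Nat.cast_natAbs]; push_cast; rfl
  -- On either side of `p`, `q ↦ |p - q|` is injective with values in `[1, n]`.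
  have hside : ∀ P : ℕ → Prop, [DecidablePred P] →
      (∀ q ∈ t, P q → ∀ q' ∈ t, P q' → (q < p ↔ q' < p)) →
      ∑ q ∈ t with P q, |(p : ℝ) - q|⁻¹ ≤ 1 + log n := by
    intro P _ hP
    simp_rw [hcast]
    refine sum_inv_comp_le_one_add_log (fun q hq q' hq' h => ?_) fun q hq => ?_
    · simp only [coe_filter, Set.mem_ofPred_eq] at hq hq'
      have := hP q hq.1 hq.2 q' hq'.1 hq'.2
      have : q ≠ p := fun h => hpt (h ▸ hq.1)
      have : q' ≠ p := fun h => hpt (h ▸ hq'.1)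
      omega
    · simp only [mem_filter] at hq
      have := ht q hq.1
      have : q ≠ p := fun h => hpt (h ▸ hq.1)
      simp only [mem_Icc]
      omega
  rw [← sum_filter_add_sum_filter_not t (· < p), two_mul]
  exact add_le_add (hside _ fun q hq h q' hq' h' => iff_of_true h h')
    (hside _ fun q hq h q' hq' h' => iff_of_false h h')

lemma sum_sum_mul_mul_le_of_le_inv_abs_sub {s : Finset ℕ} {n : ℕ} (hs : ∀ p ∈ s, p ≤ n)
    {u : ℕ → ℝ} {U : ℝ} (hu : ∀ p ∈ s, 0 ≤ u p) (hU : ∀ p ∈ s, u p ≤ U)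
    {T : ℕ → ℕ → ℝ} {δ D : ℝ} (hD : 0 ≤ D)
    (hT : ∀ p q, 0 ≤ T p q) (hdiag : ∀ p ∈ s, T p p ≤ δ)
    (hoff : ∀ p ∈ s, ∀ q ∈ s, p ≠ q → T p q ≤ D * |(p : ℝ) - q|⁻¹) :
    ∑ p ∈ s, ∑ q ∈ s, u p * u q * T p q ≤ (δ + 2 * D * (1 + log n)) * U * ∑ p ∈ s, u p := by
  rw [mul_sum]
  refine sum_le_sum fun p hp => ?_
  have hU0 : 0 ≤ U := (hu p hp).trans (hU p hp)
  have hdiag_term : u p * u p * T p p ≤ δ * U * u p := by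
    have := mul_le_mul (hU p hp) (hdiag p hp) (hT p p) hU0
    nlinarith [hu p hp]
  have hoff_term : ∀ q ∈ s.erase p, u p * u q * T p q ≤ U * D * u p * |(p : ℝ) - q|⁻¹ := by
    intro q hq
    have := mul_le_mul (hU q (mem_of_mem_erase hq))
      (hoff p hp q (mem_of_mem_erase hq) (ne_of_mem_erase hq).symm) (hT p q) hU0
    nlinarith [hu p hp]
  calc ∑ q ∈ s, u p * u q * T p q
      = u p * u p * T p p + ∑ q ∈ s.erase p, u p * u q * T p q := (add_sum_erase s _ hp).symm
    _ ≤ δ * U * u p + U * D * u p * ∑ q ∈ s.erase p, |(p : ℝ) - q|⁻¹ := by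
        rw [mul_sum]; exact add_le_add hdiag_term (sum_le_sum hoff_term)
    _ ≤ δ * U * u p + U * D * u p * (2 * (1 + log n)) := by
        gcongr
        · exact mul_nonneg (mul_nonneg hU0 hD) (hu p hp)
        · exact sum_inv_abs_sub_le (hs p hp) (fun q hq => hs q (mem_of_mem_erase hq))
            (notMem_erase p s)
    _ = (δ + 2 * D * (1 + log n)) * U * u p := by ring

lemma sq_mul_rpow_half_mul_le {γ X : ℝ} (hγ : 0 ≤ γ) (hX : 0 < X) :
    (γ * (X / 2) ^ (γ - 1)) ^ 2 * X ≤ 4 * γ ^ 2 * X ^ (2 * γ - 1) := by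
  have hhalf : (X / 2) ^ (γ - 1) = 2 ^ (1 - γ) * X ^ (γ - 1) := by
    rw [div_eq_inv_mul, mul_rpow (by norm_num) hX.le, inv_rpow (by norm_num),
      ← rpow_neg (by norm_num), neg_sub]
  have htwo : (2 : ℝ) ^ (1 - γ) ≤ 2 := by
    simpa using rpow_le_rpow_of_exponent_le (by norm_num : (1 : ℝ) ≤ 2) (by linarith : 1 - γ ≤ 1)
  have hpow : (X ^ (γ - 1)) ^ 2 * X = X ^ (2 * γ - 1) := by
    rw [← rpow_natCast, ← rpow_mul hX.le, ← rpow_add_one hX.ne']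
    norm_num; ring_nf
  calc (γ * (X / 2) ^ (γ - 1)) ^ 2 * X = γ ^ 2 * (2 ^ (1 - γ)) ^ 2 * ((X ^ (γ - 1)) ^ 2 * X) := by
        rw [hhalf]; ring
    _ ≤ γ ^ 2 * 2 ^ 2 * ((X ^ (γ - 1)) ^ 2 * X) := by gcongr
    _ = 4 * γ ^ 2 * X ^ (2 * γ - 1) := by rw [hpow]; ring

lemma inv_rpow_half_mul_rpow {γ c X : ℝ} (hX : 0 < X) :
    ((X / 2) ^ (c - 1))⁻¹ * X ^ (2 * γ - 1) = 2 ^ (c - 1) * X ^ (2 * γ - c) := by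
  rw [div_rpow hX.le (by norm_num), inv_div, div_mul_eq_mul_div, div_eq_mul_inv, ← rpow_neg hX.le,
    mul_assoc, ← rpow_add hX]
  ring_nf

lemma norm_integral_e_mul_rpow_sub_le (a b : ℝ) {c M x y : ℝ} (hc : 1 ≤ c) (hM : 0 < M)
    (hx : M ≤ x) (hy : M ≤ y) (hxy : x ≠ y) :
    ‖∫ θ in a..b, e (θ * (x ^ c - y ^ c))‖ ≤ (π * c * M ^ (c - 1))⁻¹ * |x - y|⁻¹ := by
  have hgap := mul_rpow_sub_one_mul_abs_sub_le hc hM hx hy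
  have hpos : 0 < c * M ^ (c - 1) * |x - y| := by
    have := sub_ne_zero.2 hxy
    have := rpow_pos_of_pos hM (c - 1)
    have : 0 < c := by linarith
    positivity
  calc ‖∫ θ in a..b, e (θ * (x ^ c - y ^ c))‖
      ≤ (π * |x ^ c - y ^ c|)⁻¹ := norm_integral_e_mul_le_inv a b (abs_pos.1 (hpos.trans_le hgap))
    _ ≤ (π * (c * M ^ (c - 1) * |x - y|))⁻¹ := by gcongr
    _ = (π * c * M ^ (c - 1))⁻¹ * |x - y|⁻¹ := by rw [← mul_inv, mul_assoc π, mul_assoc π]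

lemma lt_and_le_of_mem_Ioc_floor {x y : ℝ} (hy : 0 ≤ y) {p : ℕ} (hp : p ∈ Ioc ⌊y⌋₊ ⌊x⌋₊) :
    y < p ∧ p ≤ ⌊x⌋₊ := by
  rwa [mem_Ioc, Nat.floor_lt hy] at hp

lemma sum_log_prime_Ioc_floor_le (y : ℝ) {x : ℝ} (hx : 0 ≤ x) :
    ∑ p ∈ (Ioc ⌊y⌋₊ ⌊x⌋₊).filter Nat.Prime, log p ≤ log 4 * x :=
  (sum_le_sum_of_subset_of_nonneg (filter_subset_filter _ (Ioc_subset_Ioc_left (Nat.zero_le _)))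
    fun _ _ _ => log_natCast_nonneg _).trans (Chebyshev.theta_le_log4_mul_x hx)

noncomputable def S0 (γ c X θ : ℝ) : ℂ :=
  ∑ p ∈ (Ioc ⌊X / 2⌋₊ ⌊X⌋₊).filter Nat.Prime,
    ((γ * (p : ℝ) ^ (γ - 1) * log p : ℝ) : ℂ) * e (θ * (p : ℝ) ^ c)

theorem integral_norm_S0_sq_le {γ c : ℝ} (hγ0 : 0 ≤ γ) (hγ1 : γ ≤ 1) (hc : 1 ≤ c) {a b X : ℝ}
    (hab : a ≤ b) (hX : 3 ≤ X) :
    ∫ θ in a..b, ‖S0 γ c X θ‖ ^ 2 ≤ (b - a + 4 * (π * c * (X / 2) ^ (c - 1))⁻¹ * log X) *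
      ((γ * (X / 2) ^ (γ - 1)) ^ 2 * X) * (log 4 * log X) := by
  set s := (Ioc ⌊X / 2⌋₊ ⌊X⌋₊).filter Nat.Prime
  set w : ℕ → ℂ := fun p => ((γ * (p : ℝ) ^ (γ - 1) * log p : ℝ) : ℂ)
  set A := γ * (X / 2) ^ (γ - 1)
  set D := (π * c * (X / 2) ^ (c - 1))⁻¹
  set L := log X
  have hX0 : 0 < X := by linarith
  have hmem : ∀ p ∈ s, X / 2 < p ∧ p ≤ ⌊X⌋₊ := fun p hp =>
    lt_and_le_of_mem_Ioc_floor (by positivity) (mem_filter.1 hp).1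
  have hw : ∀ p ∈ s, ‖w p‖ ≤ A * log p := by
    intro p hp
    have hp0 : 0 < (p : ℝ) := (div_pos hX0 two_pos).trans (hmem p hp).1
    rw [Complex.norm_real, norm_of_nonneg (by positivity)]
    have := rpow_le_rpow_of_nonpos (by positivity) (hmem p hp).1.le (by linarith : γ - 1 ≤ 0)
    exact mul_le_mul_of_nonneg_right (mul_le_mul_of_nonneg_left this hγ0) (log_natCast_nonneg p)
  have hlog : ∀ p ∈ s, log p ≤ L := fun p hp =>
    log_le_log ((div_pos hX0 two_pos).trans (hmem p hp).1)
      ((Nat.cast_le.2 (hmem p hp).2).trans (Nat.floor_le hX0.le))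
  have hL : 1 ≤ L := by linarith [log_le_log (by norm_num) hX, log_three_gt_d9]
  have hlogn : 1 + log ⌊X⌋₊ ≤ 2 * L := by
    have := log_le_log (Nat.cast_pos.2 (Nat.floor_pos.2 (by linarith))) (Nat.floor_le hX0.le)
    linarith
  have hsum : ∑ p ∈ s, ‖w p‖ ≤ A * (log 4 * X) := by
    refine (sum_le_sum hw).trans ?_
    rw [← mul_sum]
    exact mul_le_mul_of_nonneg_left (sum_log_prime_Ioc_floor_le _ hX0.le) (by positivity)
  calc ∫ θ in a..b, ‖S0 γ c X θ‖ ^ 2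
      ≤ ∑ p ∈ s, ∑ q ∈ s, ‖w p‖ * ‖w q‖ * ‖∫ θ in a..b, e (θ * ((p : ℝ) ^ c - (q : ℝ) ^ c))‖ :=
        integral_norm_sum_sq_le s w (fun p => (p : ℝ) ^ c) a b
    _ ≤ (b - a + 2 * D * (1 + log ⌊X⌋₊)) * (A * L) * ∑ p ∈ s, ‖w p‖ := by
        refine sum_sum_mul_mul_le_of_le_inv_abs_sub (fun p hp => (hmem p hp).2)
          (fun p _ => norm_nonneg _) (fun p hp => (hw p hp).trans ?_) (by positivity)
          (fun _ _ => norm_nonneg _) (fun p _ => ?_) (fun p hp q hq hpq => ?_)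
        · exact mul_le_mul_of_nonneg_left (hlog p hp) (by positivity)
        · simpa [abs_of_nonneg (sub_nonneg.2 hab)] using norm_integral_e_mul_le_abs_sub a b 0
        · exact norm_integral_e_mul_rpow_sub_le a b hc (div_pos hX0 two_pos) (hmem p hp).1.le
            (hmem q hq).1.le (by exact_mod_cast hpq)
    _ ≤ (b - a + 2 * D * (2 * L)) * (A * L) * (A * (log 4 * X)) := by
        have hD : 0 ≤ D := by positivity
        have hAL : 0 ≤ A * L := mul_nonneg (by positivity) (by linarith)
        have : 0 ≤ (b - a + 2 * D * (2 * L)) * (A * L) := mul_nonneg (by nlinarith) hAL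
        gcongr
    _ = (b - a + 4 * D * L) * (A ^ 2 * X) * (log 4 * L) := by ring

lemma half_rpow_majorant_le {γ c a b X : ℝ} (hγ : 0 ≤ γ) (hc : 0 ≤ c) (hab : a ≤ b) (hX : 1 ≤ X) :
    (b - a + 4 * (π * c * (X / 2) ^ (c - 1))⁻¹ * log X) * ((γ * (X / 2) ^ (γ - 1)) ^ 2 * X) *
      (log 4 * log X) ≤ 4 * γ ^ 2 * log 4 *
      ((b - a) * X ^ (2 * γ - 1) * log X +
        4 * 2 ^ (c - 1) / (π * c) * X ^ (2 * γ - c) * log X ^ 2) := by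
  have hX0 : 0 < X := by linarith
  have hL : 0 ≤ log X := log_nonneg hX
  have hDX : (π * c * (X / 2) ^ (c - 1))⁻¹ * X ^ (2 * γ - 1) =
      2 ^ (c - 1) / (π * c) * X ^ (2 * γ - c) := by
    rw [mul_inv, mul_assoc, inv_rpow_half_mul_rpow hX0]
    ring
  calc _ ≤ (b - a + 4 * (π * c * (X / 2) ^ (c - 1))⁻¹ * log X) * (4 * γ ^ 2 * X ^ (2 * γ - 1)) *
        (log 4 * log X) := by
        gcongr _ * ?_ * _
        exact sq_mul_rpow_half_mul_le hγ hX0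
    _ = _ := by linear_combination 16 * γ ^ 2 * log 4 * log X ^ 2 * hDX

theorem stmt_7 (γ c : ℝ) (hγ0 : 0 < γ) (hγ1 : γ < 1) (hc : 1 < c) :
    ∃ C > 0, ∀ a b : ℝ, a ≤ b → ∀ X : ℝ, 3 ≤ X →
      (∫ θ in a..b,
        ‖∑ p ∈ (Finset.Ioc ⌊X / 2⌋₊ ⌊X⌋₊).filter Nat.Prime,
          ((γ * (p : ℝ) ^ (γ - 1) * Real.log p : ℝ) : ℂ) * e (θ * (p : ℝ) ^ c)‖ ^ 2)
        ≤ C * ((b - a) * X ^ (2 * γ - 1) * Real.log X + X ^ (2 * γ - c) * (Real.log X) ^ 2) := by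
  set K := 4 * 2 ^ (c - 1) / (π * c)
  have hK : 0 < K := by positivity
  refine ⟨4 * γ ^ 2 * log 4 * (1 + K), by positivity, fun a b hab X hX => ?_⟩
  have hlogX : 0 ≤ log X := log_nonneg (by linarith)
  have hfirst : 0 ≤ (b - a) * X ^ (2 * γ - 1) * log X := by
    have := sub_nonneg.2 hab
    positivity
  have hsecond : 0 ≤ X ^ (2 * γ - c) * log X ^ 2 := by positivity
  refine ((integral_norm_S0_sq_le hγ0.le hγ1.le hc.le hab hX).trans
    (half_rpow_majorant_le hγ0.le (by linarith) hab (by linarith))).trans ?_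
  rw [mul_assoc _ (1 + K)]
  gcongr
  nlinarith
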